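/- Let R ⊂ T be an inert integral minimal ring extension (M := (R :_R T) is a maximal ideal of both R and T, and R/M ⊂ T/M is a minimal field extension), and let G be a locally finite group of automorphisms of T leaving R invariant with R^G ≠ T^G and char(R^G/(M ∩ T^G)) ∤ n_r for all r ∈ R. Then R^G ⊂ T^G is an inert integral minimal ring extension with crucial maximal ideal (R^G :_{R^G} T^G) = M ∩ R^G. -/

import Mathlib

/-- The fixed subring `T^G` of a group `G` acting on a commutative ring `T`. -/
def fixedSubring (G T : Type*) [CommRing T] [Group G] [MulSemiringAction G T] :
    Subring T where
  carrier := MulAction.fixedPoints G T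
  zero_mem' := by intro σ; simp
  one_mem' := by intro σ; simp
  add_mem' := by intro a b ha hb σ; simp [smul_add, ha σ, hb σ]
  neg_mem' := by intro a ha σ; simp [smul_neg, ha σ]
  mul_mem' := by intro a b ha hb σ; simp [smul_mul', ha σ, hb σ]

/-- `t` is integral over the subring `A`: it is a root of a monic polynomial
with coefficients in `A`. -/
def IntegralOver {T : Type*} [CommRing T] (A : Subring T) (t : T) : Prop :=
  ∃ p : Polynomial T, p.Monic ∧ (∀ i, p.coeff i ∈ A) ∧ Polynomial.eval t p = 0

/-- `A ⊂ B` is a minimal ring extension: `A < B` and there is no ring strictly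
between `A` and `B`. -/
def IsMinimalPair {T : Type*} [CommRing T] (A B : Subring T) : Prop :=
  A < B ∧ ∀ S : Subring T, A ≤ S → S ≤ B → S = A ∨ S = B

/-- The conductor `(R :_R T)` as an ideal of the subring `R` of `T`. -/
def conductorIdeal {T : Type*} [CommRing T] (R : Subring T) : Ideal R where
  carrier := {r | ∀ t : T, (r : T) * t ∈ R}
  zero_mem' := by intro t; simpa using R.zero_mem
  add_mem' := by
    intro a b ha hb t
    have := R.add_mem (ha t) (hb t)
    simpa [add_mul] using this
  smul_mem' := by
    intro c r hr t
    have := R.mul_mem c.2 (hr t)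
    simpa [smul_eq_mul, mul_assoc] using this
open Polynomial

noncomputable section Aux
variable {G T : Type*} [CommRing T] [Group G] [MulSemiringAction G T]

local instance : DecidableEq T := Classical.decEq T

lemma s18_mem_fixedSubring {x : T} : x ∈ fixedSubring G T ↔ ∀ σ : G, σ • x = x :=
  Iff.rfl

lemma s18_mem_oF (hlf : ∀ t : T, (MulAction.orbit G t).Finite) {r x : T} :
    x ∈ (hlf r).toFinset ↔ x ∈ MulAction.orbit G r :=
  Set.Finite.mem_toFinset _

lemma s18_oF_image (hlf : ∀ t : T, (MulAction.orbit G t).Finite) (σ : G) (r : T) :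
    ((hlf r).toFinset).image (fun x => σ • x) = (hlf r).toFinset := by
  ext x
  simp only [Finset.mem_image, s18_mem_oF]
  constructor
  · rintro ⟨y, hy, rfl⟩
    rcases hy with ⟨g, rfl⟩
    exact ⟨σ * g, mul_smul σ g r⟩
  · rintro ⟨g, rfl⟩
    exact ⟨σ⁻¹ • g • r, ⟨σ⁻¹ * g, mul_smul _ _ _⟩, smul_inv_smul σ _⟩

lemma s18_smul_sum_oF (hlf : ∀ t : T, (MulAction.orbit G t).Finite) (σ : G) (r : T) :
    σ • (∑ x ∈ (hlf r).toFinset, x) = ∑ x ∈ (hlf r).toFinset, x := by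
  have h1 : σ • (∑ x ∈ (hlf r).toFinset, x)
      = ∑ x ∈ (hlf r).toFinset, σ • x :=
    map_sum (MulSemiringAction.toRingHom G T σ) _ _
  have h2 : ∑ x ∈ ((hlf r).toFinset).image (fun x => σ • x), x
      = ∑ x ∈ (hlf r).toFinset, σ • x :=
    Finset.sum_image (fun a _ b _ h => smul_left_cancel σ h)
  rw [h1, ← h2, s18_oF_image hlf]

lemma s18_smul_prod_oF (hlf : ∀ t : T, (MulAction.orbit G t).Finite) (σ : G) (r : T) :
    σ • (∏ x ∈ (hlf r).toFinset, x) = ∏ x ∈ (hlf r).toFinset, x := by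
  have h1 : σ • (∏ x ∈ (hlf r).toFinset, x)
      = ∏ x ∈ (hlf r).toFinset, σ • x :=
    map_prod (MulSemiringAction.toRingHom G T σ) _ _
  have h2 : ∏ x ∈ ((hlf r).toFinset).image (fun x => σ • x), x
      = ∏ x ∈ (hlf r).toFinset, σ • x :=
    Finset.prod_image (fun a _ b _ h => smul_left_cancel σ h)
  rw [h1, ← h2, s18_oF_image hlf]

lemma s18_oF_subset_R (hlf : ∀ t : T, (MulAction.orbit G t).Finite) {R : Subring T}
    (hinv : ∀ σ : G, ∀ r ∈ R, σ • r ∈ R) {r : T} (hr : r ∈ R) {x : T}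
    (hx : x ∈ (hlf r).toFinset) : x ∈ R := by
  rcases (s18_mem_oF hlf).1 hx with ⟨g, rfl⟩
  exact hinv g r hr

lemma s18_N_sub_R {R : Subring T} {N : Ideal T}
    (hNset : ∀ x : T, x ∈ N ↔ x ∈ R ∧ ∀ t : T, x * t ∈ R) {x : T} (hx : x ∈ N) :
    x ∈ R := ((hNset x).1 hx).1

lemma s18_smul_mem_N {R : Subring T} (hinv : ∀ σ : G, ∀ r ∈ R, σ • r ∈ R) {N : Ideal T}
    (hNset : ∀ x : T, x ∈ N ↔ x ∈ R ∧ ∀ t : T, x * t ∈ R) (σ : G) {x : T}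
    (hx : x ∈ N) : σ • x ∈ N := by
  rw [hNset] at hx ⊢
  refine ⟨hinv σ x hx.1, fun t => ?_⟩
  have h2 := hinv σ _ (hx.2 (σ⁻¹ • t))
  rwa [smul_mul', smul_inv_smul] at h2

lemma s18_exists_inv_R {R : Subring T} {N : Ideal T}
    (hNset : ∀ x : T, x ∈ N ↔ x ∈ R ∧ ∀ t : T, x * t ∈ R)
    (hMmaxR : (conductorIdeal R).IsMaximal)
    {a : T} (ha : a ∈ R) (han : a ∉ N) : ∃ y ∈ R, a * y - 1 ∈ N := by
  have hc : (⟨a, ha⟩ : R) ∉ conductorIdeal R := by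
    intro hc
    exact han ((hNset a).2 ⟨ha, fun t => hc t⟩)
  obtain ⟨y, i, hi, hyx⟩ := hMmaxR.exists_inv hc
  refine ⟨(y : T), y.2, ?_⟩
  have hco : (y : T) * a + (i : T) = 1 := by
    have := congrArg (Subtype.val) hyx
    push_cast at this
    simpa using this
  have hiN : (i : T) ∈ N := (hNset _).2 ⟨(i : ↥R).2, fun t => hi t⟩
  have : a * (y : T) - 1 = -(i : T) := by rw [← hco]; ring
  rw [this]
  exact N.neg_mem hiN

end Aux
noncomputable section Aux2
open Polynomial
variable {G T : Type*} [CommRing T] [Group G] [MulSemiringAction G T]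

lemma s18_inv (hlf : ∀ t : T, (MulAction.orbit G t).Finite) {N : Ideal T}
    (hNinv : ∀ (σ : G) x, x ∈ N → σ • x ∈ N)
    (x s : T) (hx : ∀ σ : G, σ • x = x) (hrel : x * s - 1 ∈ N) :
    ∃ z : T, (∀ σ : G, σ • z = z) ∧
      (∀ S : Subring T, x ∈ S → (∀ w ∈ (hlf s).toFinset, w ∈ S) → z ∈ S) ∧
      x * z - 1 ∈ N := by
  set n : ℕ := (hlf s).toFinset.card with hn
  have hpos : 0 < n := Finset.card_pos.2 ⟨s, (s18_mem_oF hlf).2 (MulAction.mem_orbit_self s)⟩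
  refine ⟨x ^ (n - 1) * ∏ w ∈ (hlf s).toFinset, w, ?_, ?_, ?_⟩
  · intro σ
    have h1 : σ • x ^ (n - 1) = (σ • x) ^ (n - 1) :=
      map_pow (MulSemiringAction.toRingHom G T σ) x (n - 1)
    rw [smul_mul', h1, hx, s18_smul_prod_oF hlf]
  · intro S hxS hwS
    exact S.mul_mem (S.pow_mem hxS _) (S.prod_mem hwS)
  · have key : x * (x ^ (n - 1) * ∏ w ∈ (hlf s).toFinset, w)
        = ∏ w ∈ (hlf s).toFinset, (x * w) := by
      rw [Finset.prod_mul_distrib, Finset.prod_const, ← hn, ← mul_assoc, ← pow_succ',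
        Nat.sub_add_cancel hpos]
    rw [← Ideal.Quotient.eq_zero_iff_mem, map_sub, map_one, sub_eq_zero, key, map_prod]
    have hone : ∀ w ∈ (hlf s).toFinset, Ideal.Quotient.mk N (x * w) = 1 := by
      intro w hw
      rcases (s18_mem_oF hlf).1 hw with ⟨g, rfl⟩
      have : x * (g • s) - 1 = g • (x * s - 1) := by
        rw [smul_sub, smul_mul', hx, smul_one]
      rw [← sub_eq_zero, ← map_one (Ideal.Quotient.mk N), ← map_sub,
        Ideal.Quotient.eq_zero_iff_mem, this]
      exact hNinv g _ hrel
    rw [Finset.prod_congr rfl hone, Finset.prod_const, one_pow]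

lemma s18_IA_max (hlf : ∀ t : T, (MulAction.orbit G t).Finite) {R : Subring T}
    (hinv : ∀ σ : G, ∀ r ∈ R, σ • r ∈ R)
    (hMmaxR : (conductorIdeal R).IsMaximal) {N : Ideal T}
    (hNset : ∀ x : T, x ∈ N ↔ x ∈ R ∧ ∀ t : T, x * t ∈ R) (hNmax : N.IsMaximal) :
    (N.comap (R ⊓ fixedSubring G T).subtype).IsMaximal := by
  set A := R ⊓ fixedSubring G T with hA
  apply Ideal.Quotient.maximal_of_isField
  have hnontriv : N.comap A.subtype ≠ ⊤ := by
    intro h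
    have h1 : (1 : ↥A) ∈ N.comap A.subtype := h ▸ Submodule.mem_top
    exact hNmax.ne_top (Ideal.eq_top_iff_one N |>.2 (by simpa using h1))
  haveI := Ideal.Quotient.nontrivial_iff.mpr hnontriv
  refine ⟨exists_pair_ne _, mul_comm, ?_⟩
  intro a ha
  obtain ⟨x, rfl⟩ := Ideal.Quotient.mk_surjective a
  have hxN : (x : T) ∉ N := by
    intro h
    exact ha (Ideal.Quotient.eq_zero_iff_mem.2 h)
  obtain ⟨y, hyR, hrel⟩ := s18_exists_inv_R hNset hMmaxR x.2.1 hxN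
  have hxfix : ∀ σ : G, σ • (x : T) = (x : T) := x.2.2
  obtain ⟨z, hzfix, hzmem, hzrel⟩ :=
    s18_inv hlf (fun σ w hw => s18_smul_mem_N hinv hNset σ hw) (x : T) y hxfix hrel
  have hzR : z ∈ R := hzmem R x.2.1 (fun w hw => s18_oF_subset_R hlf hinv hyR hw)
  refine ⟨Ideal.Quotient.mk _ ⟨z, hzR, hzfix⟩, ?_⟩
  rw [← map_mul, ← map_one (Ideal.Quotient.mk (N.comap A.subtype)), Ideal.Quotient.eq]
  show ((x : T) * z - 1 : T) ∈ N
  exact hzrel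

lemma s18_IB_max (hlf : ∀ t : T, (MulAction.orbit G t).Finite) {R : Subring T}
    (hinv : ∀ σ : G, ∀ r ∈ R, σ • r ∈ R) {N : Ideal T}
    (hNset : ∀ x : T, x ∈ N ↔ x ∈ R ∧ ∀ t : T, x * t ∈ R) (hNmax : N.IsMaximal) :
    (N.comap (fixedSubring G T).subtype).IsMaximal := by
  set B := fixedSubring G T with hB
  apply Ideal.Quotient.maximal_of_isField
  have hnontriv : N.comap B.subtype ≠ ⊤ := by
    intro h
    have h1 : (1 : ↥B) ∈ N.comap B.subtype := h ▸ Submodule.mem_top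
    exact hNmax.ne_top (Ideal.eq_top_iff_one N |>.2 (by simpa using h1))
  haveI := Ideal.Quotient.nontrivial_iff.mpr hnontriv
  refine ⟨exists_pair_ne _, mul_comm, ?_⟩
  intro a ha
  obtain ⟨x, rfl⟩ := Ideal.Quotient.mk_surjective a
  have hxN : (x : T) ∉ N := by
    intro h
    exact ha (Ideal.Quotient.eq_zero_iff_mem.2 h)
  obtain ⟨y, i, hiN, hrel0⟩ := hNmax.exists_inv hxN
  have hrel : (x : T) * y - 1 ∈ N := by
    have : (x : T) * y - 1 = -i := by rw [← hrel0]; ring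
    rw [this]; exact N.neg_mem hiN
  have hxfix : ∀ σ : G, σ • (x : T) = (x : T) := x.2
  obtain ⟨z, hzfix, hzmem, hzrel⟩ :=
    s18_inv hlf (fun σ w hw => s18_smul_mem_N hinv hNset σ hw) (x : T) y hxfix hrel
  refine ⟨Ideal.Quotient.mk _ ⟨z, hzfix⟩, ?_⟩
  rw [← map_mul, ← map_one (Ideal.Quotient.mk (N.comap B.subtype)), Ideal.Quotient.eq]
  show ((x : T) * z - 1 : T) ∈ N
  exact hzrel

end Aux2
noncomputable section Aux3
open Polynomial
variable {G T : Type*} [CommRing T] [Group G] [MulSemiringAction G T]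

lemma s18_avg (hlf : ∀ t : T, (MulAction.orbit G t).Finite) {R : Subring T}
    (hinv : ∀ σ : G, ∀ r ∈ R, σ • r ∈ R)
    (hMmaxR : (conductorIdeal R).IsMaximal) {N : Ideal T}
    (hNset : ∀ x : T, x ∈ N ↔ x ∈ R ∧ ∀ t : T, x * t ∈ R) (hNmax : N.IsMaximal)
    (hchar : ∀ r : T, r ∈ R →
      ¬ (ringChar (↥(R ⊓ fixedSubring G T) ⧸
            (N.comap (R ⊓ fixedSubring G T).subtype)) : ℕ)
          ∣ Nat.card (MulAction.orbit G r))
    (r : T) (hr : r ∈ R) (hfix : ∀ σ : G, σ • r - r ∈ N) :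
    ∃ r' ∈ R ⊓ fixedSubring G T, r - r' ∈ N := by
  set A := R ⊓ fixedSubring G T with hA
  set IA := N.comap A.subtype with hIA
  haveI hIAmax : IA.IsMaximal := s18_IA_max hlf hinv hMmaxR hNset hNmax
  set n : ℕ := (hlf r).toFinset.card with hn
  have hcard : Nat.card (MulAction.orbit G r) = n := by
    rw [Nat.card_coe_set_eq, Set.ncard_eq_toFinset_card _ (hlf r)]
  have hndvd : ¬ (ringChar (↥A ⧸ IA) : ℕ) ∣ n := by
    have := hchar r hr
    rwa [hcard] at this
  have hne0 : ((n : ℕ) : ↥A ⧸ IA) ≠ 0 := fun h => hndvd ((ringChar.spec _ n).1 h)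
  have hexc : ∃ c : ↥A, Ideal.Quotient.mk IA ((n : ↥A) * c) = 1 := by
    letI : Field (↥A ⧸ IA) := Ideal.Quotient.field IA
    obtain ⟨c, hc⟩ := Ideal.Quotient.mk_surjective (((n : ℕ) : ↥A ⧸ IA))⁻¹
    refine ⟨c, ?_⟩
    rw [map_mul, hc, map_natCast, mul_inv_cancel₀ hne0]
  obtain ⟨c, h1⟩ := hexc
  have hinv1 : ((n : ↥A) : T) * (c : T) - 1 ∈ N := by
    have h2 : ((n : ↥A) * c - 1 : ↥A) ∈ IA :=
      Ideal.Quotient.eq.1 (by rw [map_one]; exact h1)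
    have h3 : A.subtype ((n : ↥A) * c - 1) ∈ N := h2
    simpa using h3
  -- trace of r
  have htrR : (∑ w ∈ (hlf r).toFinset, w) ∈ A := by
    refine ⟨R.sum_mem (fun w hw => s18_oF_subset_R hlf hinv hr hw), ?_⟩
    exact fun σ => s18_smul_sum_oF hlf σ r
  refine ⟨(c : T) * ∑ w ∈ (hlf r).toFinset, w, A.mul_mem c.2 htrR, ?_⟩
  rw [← Ideal.Quotient.eq]
  have hw1 : ∀ w ∈ (hlf r).toFinset, Ideal.Quotient.mk N w = Ideal.Quotient.mk N r := by
    intro w hw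
    rcases (s18_mem_oF hlf).1 hw with ⟨g, rfl⟩
    exact Ideal.Quotient.eq.2 (hfix g)
  have hNc : Ideal.Quotient.mk N (((n : ℕ) : T) * (c : T)) = 1 := by
    have : ((n : ↥A) : T) = ((n : ℕ) : T) := by push_cast; ring
    rw [← sub_eq_zero, ← map_one (Ideal.Quotient.mk N), ← map_sub,
      Ideal.Quotient.eq_zero_iff_mem, ← this]
    exact hinv1
  calc Ideal.Quotient.mk N r
      = 1 * Ideal.Quotient.mk N r := (one_mul _).symm
    _ = Ideal.Quotient.mk N (((n : ℕ) : T) * (c : T)) * Ideal.Quotient.mk N r := by rw [hNc]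
    _ = Ideal.Quotient.mk N ((c : T) * ∑ w ∈ (hlf r).toFinset, w) := by
        rw [map_mul, map_mul, map_sum]
        rw [Finset.sum_congr rfl hw1, Finset.sum_const, nsmul_eq_mul, map_natCast]
        ring

end Aux3
noncomputable section Aux4
open Polynomial
variable {G T : Type*} [CommRing T] [Group G] [MulSemiringAction G T]

lemma s18_min_RT {R : Subring T} {N : Ideal T}
    (hNset : ∀ x : T, x ∈ N ↔ x ∈ R ∧ ∀ t : T, x * t ∈ R)
    (hf2 : ∀ S : Subring (T ⧸ N), ((Ideal.Quotient.mk N).comp R.subtype).range ≤ S →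
      S = ((Ideal.Quotient.mk N).comp R.subtype).range ∨ S = ⊤)
    (S : Subring T) (hRS : R ≤ S) : S = R ∨ S = ⊤ := by
  set mkN := (Ideal.Quotient.mk N) with hmk
  have hKle : ((mkN).comp R.subtype).range ≤ S.map (mkN : T →+* T ⧸ N) := by
    rintro y ⟨a, rfl⟩
    exact ⟨(a : T), hRS a.2, rfl⟩
  rcases hf2 (S.map (mkN : T →+* T ⧸ N)) hKle with h | h
  · left
    refine le_antisymm (fun s hs => ?_) hRS
    have : mkN s ∈ S.map (mkN : T →+* T ⧸ N) := ⟨s, hs, rfl⟩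
    rw [h] at this
    obtain ⟨a, ha⟩ := this
    have hd : (a : T) - s ∈ N := Ideal.Quotient.eq.1 ha
    have : s = (a : T) - ((a : T) - s) := by ring
    rw [this]
    exact R.sub_mem a.2 (((hNset _).1 hd).1)
  · right
    rw [eq_top_iff]
    intro x _
    have : mkN x ∈ S.map (mkN : T →+* T ⧸ N) := by rw [h]; trivial
    obtain ⟨s, hsS, hs⟩ := this
    have hd : s - x ∈ N := Ideal.Quotient.eq.1 hs
    have : x = s - (s - x) := by ring
    rw [this]
    exact S.sub_mem hsS (hRS (((hNset _).1 hd).1))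

lemma s18_closure_poly {R : Subring T} (t : T) :
    ∀ x ∈ Subring.closure ((R : Set T) ∪ {t}),
      ∃ p : Polynomial T, (∀ i, p.coeff i ∈ R) ∧ p.eval t = x := by
  intro x hx
  induction hx using Subring.closure_induction with
  | mem x hx =>
    rcases hx with hx | hx
    · refine ⟨C x, fun i => ?_, eval_C⟩
      rw [coeff_C]; split_ifs; exacts [hx, R.zero_mem]
    · refine ⟨X, fun i => ?_, ?_⟩
      · rw [coeff_X]; split_ifs; exacts [R.one_mem, R.zero_mem]
      · rw [eval_X]; exact (Set.mem_singleton_iff.1 hx).symm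
  | zero => exact ⟨0, fun i => by simpa using R.zero_mem, by simp⟩
  | one =>
    refine ⟨1, fun i => ?_, by simp⟩
    rw [coeff_one]; split_ifs; exacts [R.one_mem, R.zero_mem]
  | add x y hx hy ihx ihy =>
    obtain ⟨p, hp, hpe⟩ := ihx
    obtain ⟨q, hq, hqe⟩ := ihy
    exact ⟨p + q, fun i => by rw [coeff_add]; exact R.add_mem (hp i) (hq i),
      by rw [eval_add, hpe, hqe]⟩
  | neg x hx ihx =>
    obtain ⟨p, hp, hpe⟩ := ihx
    exact ⟨-p, fun i => by rw [coeff_neg]; exact R.neg_mem (hp i),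
      by rw [eval_neg, hpe]⟩
  | mul x y hx hy ihx ihy =>
    obtain ⟨p, hp, hpe⟩ := ihx
    obtain ⟨q, hq, hqe⟩ := ihy
    refine ⟨p * q, fun i => ?_, by rw [eval_mul, hpe, hqe]⟩
    rw [coeff_mul]
    exact R.sum_mem (fun c _ => R.mul_mem (hp c.1) (hq c.2))

lemma s18_construct {R : Subring T} {N : Ideal T}
    (hNset : ∀ x : T, x ∈ N ↔ x ∈ R ∧ ∀ t : T, x * t ∈ R)
    (hMmaxR : (conductorIdeal R).IsMaximal)
    (t : T) (p : Polynomial T) (hc : ∀ i, p.coeff i ∈ R)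
    (hrel : t * p.eval t - 1 ∈ N) (ha : p.leadingCoeff ∉ N) :
    ∃ q : Polynomial T, q.Monic ∧ (∀ i, q.coeff i ∈ R) ∧ q.eval t = 0 := by
  set d := p.natDegree with hd
  set a := p.leadingCoeff with haa
  obtain ⟨y, hyR, hay⟩ := s18_exists_inv_R hNset hMmaxR (hc d) ha
  set i := 1 - a * y with hi
  have hiN : i ∈ N := by
    have : i = -(a * y - 1) := by rw [hi]; ring
    rw [this]; exact N.neg_mem hay
  have hiR : i ∈ R := R.sub_mem R.one_mem (R.mul_mem (hc d) hyR)
  set g : Polynomial T := C y * p * X + C i * X ^ (d + 1) - C y with hg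
  have hg1 : g.coeff (d + 1) = 1 := by
    have h2 : p.coeff d = a := rfl
    rw [hg, coeff_sub, coeff_add, coeff_mul_X, coeff_C_mul, coeff_C_mul, coeff_X_pow,
      coeff_C]
    split_ifs <;>
      first
        | (exfalso; omega)
        | (exfalso; assumption)
        | (rw [h2, hi]; ring)
  have hgd : g.natDegree ≤ d + 1 := by
    refine le_trans (natDegree_sub_le _ _) (max_le (le_trans (natDegree_add_le _ _)
      (max_le ?_ ?_)) ?_)
    · refine le_trans (natDegree_mul_le) ?_
      have h0 : (C y * p).natDegree ≤ d := by
        refine le_trans (natDegree_mul_le) ?_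
        simp only [natDegree_C, zero_add]; exact le_rfl
      have := natDegree_X_le (R := T)
      omega
    · refine le_trans (natDegree_mul_le) ?_
      have h3 : (X ^ (d + 1) : Polynomial T).natDegree ≤ d + 1 := natDegree_X_pow_le _
      simp only [natDegree_C, zero_add]
      exact h3
    · simp [natDegree_C]
  have hgcoeff : ∀ k, g.coeff k ∈ R := by
    intro k
    rw [hg, coeff_sub, coeff_add, coeff_C_mul, coeff_X_pow, coeff_C]
    have h1 : (C y * p * X).coeff k ∈ R := by
      cases k with
      | zero => rw [mul_coeff_zero, coeff_X_zero, mul_zero]; exact R.zero_mem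
      | succ j =>
        rw [coeff_mul_X, coeff_C_mul]
        exact R.mul_mem hyR (hc j)
    refine R.sub_mem (R.add_mem h1 ?_) ?_
    · split_ifs
      · simpa using hiR
      · simpa using R.zero_mem
    · split_ifs
      · exact hyR
      · exact R.zero_mem
  have hgmonic : g.Monic := monic_of_natDegree_le_of_coeff_eq_one (d + 1) hgd hg1
  set c := g.eval t with hcdef
  have hcN : c ∈ N := by
    have heq : c = y * (t * p.eval t - 1) + i * t ^ (d + 1) := by
      rw [hcdef, hg]
      simp only [eval_sub, eval_add, eval_mul, eval_C, eval_X, eval_pow]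
      ring
    rw [heq]
    exact N.add_mem (N.mul_mem_left y hrel) (N.mul_mem_right _ hiN)
  refine ⟨g - C c, ?_, ?_, ?_⟩
  · apply monic_of_natDegree_le_of_coeff_eq_one (d + 1)
    · exact le_trans (natDegree_sub_le _ _) (max_le hgd (by simp [natDegree_C]))
    · rw [coeff_sub, hg1, coeff_C, if_neg (Nat.succ_ne_zero d), sub_zero]
  · intro k
    rw [coeff_sub, coeff_C]
    refine R.sub_mem (hgcoeff k) ?_
    split_ifs
    · exact ((hNset c).1 hcN).1
    · exact R.zero_mem
  · rw [eval_sub, eval_C, ← hcdef, sub_self]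

lemma s18_poly_induct {R : Subring T} {N : Ideal T}
    (hNset : ∀ x : T, x ∈ N ↔ x ∈ R ∧ ∀ t : T, x * t ∈ R)
    (hMmaxR : (conductorIdeal R).IsMaximal) (hNmax : N.IsMaximal) (t : T) :
    ∀ (n : ℕ) (p : Polynomial T), p.natDegree ≤ n → (∀ i, p.coeff i ∈ R) →
      t * p.eval t - 1 ∈ N →
      ∃ q : Polynomial T, q.Monic ∧ (∀ i, q.coeff i ∈ R) ∧ q.eval t = 0 := by
  intro n
  induction n with
  | zero =>
    intro p hdeg hc hrel
    by_cases ha : p.leadingCoeff ∉ N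
    · exact s18_construct hNset hMmaxR t p hc hrel ha
    · push_neg at ha
      exfalso
      have hd0 : p.natDegree = 0 := Nat.le_zero.1 hdeg
      obtain ⟨x, hx⟩ := natDegree_eq_zero.1 hd0
      have hxN : x ∈ N := by
        have : p.leadingCoeff = x := by rw [← hx]; simp [leadingCoeff]
        rwa [this] at ha
      have h1 : t * p.eval t ∈ N := by
        rw [← hx, eval_C]
        exact N.mul_mem_left t hxN
      have : (1 : T) ∈ N := by
        have := N.sub_mem h1 hrel
        simpa using this
      exact hNmax.ne_top ((Ideal.eq_top_iff_one N).2 this)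
  | succ n ih =>
    intro p hdeg hc hrel
    by_cases ha : p.leadingCoeff ∉ N
    · exact s18_construct hNset hMmaxR t p hc hrel ha
    · push_neg at ha
      apply ih p.eraseLead
      · have := p.eraseLead_natDegree_le
        omega
      · intro i
        rw [eraseLead_coeff]
        split_ifs
        · exact R.zero_mem
        · exact hc i
      · have hsplit : p.eraseLead.eval t + p.leadingCoeff * t ^ p.natDegree
            = p.eval t := by
          have h := congrArg (eval t) p.eraseLead_add_C_mul_X_pow
          rw [eval_add, eval_mul, eval_C, eval_pow, eval_X] at h
          exact h
        have heq : t * p.eraseLead.eval t - 1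
            = (t * p.eval t - 1) - p.leadingCoeff * t ^ (p.natDegree + 1) := by
          rw [← hsplit]; ring
        rw [heq]
        exact N.sub_mem hrel (N.mul_mem_right _ ha)

end Aux4
noncomputable section Aux5
open Polynomial
variable {G T : Type*} [CommRing T] [Group G] [MulSemiringAction G T]

lemma s18_integral_R {R : Subring T} {N : Ideal T}
    (hNset : ∀ x : T, x ∈ N ↔ x ∈ R ∧ ∀ t : T, x * t ∈ R)
    (hMmaxR : (conductorIdeal R).IsMaximal) (hNmax : N.IsMaximal)
    (hf2 : ∀ S : Subring (T ⧸ N), ((Ideal.Quotient.mk N).comp R.subtype).range ≤ S →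
      S = ((Ideal.Quotient.mk N).comp R.subtype).range ∨ S = ⊤)
    (t : T) : ∃ p : Polynomial T, p.Monic ∧ (∀ i, p.coeff i ∈ R) ∧ p.eval t = 0 := by
  by_cases htR : t ∈ R
  · refine ⟨X - C t, monic_X_sub_C t, fun i => ?_, by simp⟩
    rw [coeff_sub, coeff_X, coeff_C]
    split_ifs <;>
      first
        | omega
        | (simpa using R.one_mem)
        | (simpa using R.neg_mem htR)
        | (simpa using R.zero_mem)
  · have hS := s18_min_RT hNset hf2 (Subring.closure ((R : Set T) ∪ {t}))
      (fun r hr => Subring.subset_closure (Or.inl hr))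
    have htS : t ∈ Subring.closure ((R : Set T) ∪ {t}) :=
      Subring.subset_closure (Or.inr rfl)
    rcases hS with hS | hS
    · exact absurd (hS ▸ htS) htR
    · have htN : t ∉ N := fun h => htR (((hNset t).1 h).1)
      obtain ⟨y, i, hiN, hrel0⟩ := hNmax.exists_inv htN
      have hyS : y ∈ Subring.closure ((R : Set T) ∪ {t}) := by rw [hS]; trivial
      obtain ⟨p, hpc, hpe⟩ := s18_closure_poly t y hyS
      have hrel : t * p.eval t - 1 ∈ N := by
        rw [hpe]
        have : t * y - 1 = -i := by rw [← hrel0]; ring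
        rw [this]; exact N.neg_mem hiN
      exact s18_poly_induct hNset hMmaxR hNmax t p.natDegree p le_rfl hpc hrel

lemma s18_coeff_prod {R : Subring T} {ι : Type*} (s : Finset ι) (f : ι → Polynomial T)
    (h : ∀ w ∈ s, ∀ k, (f w).coeff k ∈ R) : ∀ k, (∏ w ∈ s, f w).coeff k ∈ R := by
  classical
  induction s using Finset.induction_on with
  | empty =>
    intro k
    rw [Finset.prod_empty, coeff_one]
    split_ifs; exacts [R.one_mem, R.zero_mem]
  | insert a s' hnotmem ih =>
    intro k
    rw [Finset.prod_insert hnotmem, coeff_mul]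
    refine R.sum_mem (fun c _ => R.mul_mem (h a (Finset.mem_insert_self a s') c.1) ?_)
    exact ih (fun w hw k' => h w (Finset.mem_insert_of_mem hw) k') c.2

lemma s18_orbit_poly (hlf : ∀ t : T, (MulAction.orbit G t).Finite) {R : Subring T}
    (hinv : ∀ σ : G, ∀ r ∈ R, σ • r ∈ R) {r : T} (hr : r ∈ R) :
    ∃ q : Polynomial T, q.Monic ∧ (∀ i, q.coeff i ∈ R ⊓ fixedSubring G T) ∧
      q.eval r = 0 := by
  classical
  set q : Polynomial T := ∏ w ∈ (hlf r).toFinset, (X - C w) with hq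
  have hmonic : q.Monic := monic_prod_of_monic _ _ (fun w _ => monic_X_sub_C w)
  have hcR : ∀ i, q.coeff i ∈ R := by
    refine s18_coeff_prod _ _ (fun w hw k => ?_)
    have hwR : w ∈ R := s18_oF_subset_R hlf hinv hr hw
    rw [coeff_sub, coeff_X, coeff_C]
    split_ifs <;>
      first
        | omega
        | (simpa using R.one_mem)
        | (simpa using R.neg_mem hwR)
        | (simpa using R.zero_mem)
  have hfix : ∀ (σ : G) (i : ℕ), σ • q.coeff i = q.coeff i := by
    intro σ i
    set φ := MulSemiringAction.toRingHom G T σ with hφ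
    have hmap : q.map φ = q := by
      rw [hq]
      have h1 : (∏ w ∈ (hlf r).toFinset, (X - C w)).map φ
          = ∏ w ∈ (hlf r).toFinset, ((X - C w).map φ) := by
        rw [← Polynomial.coe_mapRingHom, map_prod]
      rw [h1]
      have h2 : ∀ w ∈ (hlf r).toFinset, (X - C w).map φ = X - C (σ • w) := by
        intro w _
        rw [Polynomial.map_sub, Polynomial.map_X, Polynomial.map_C]
        rfl
      rw [Finset.prod_congr rfl h2]
      have h3 : ∏ w ∈ (hlf r).toFinset, (X - C (σ • w))
          = ∏ w ∈ ((hlf r).toFinset).image (fun x => σ • x), (X - C w) :=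
        (Finset.prod_image (f := fun w => X - C w) (g := fun x : T => σ • x)
          (s := (hlf r).toFinset) (fun a _ b _ h => smul_left_cancel σ h)).symm
      rw [h3, s18_oF_image hlf]
    conv_rhs => rw [← hmap]
    rw [Polynomial.coeff_map]
    rfl
  refine ⟨q, hmonic, fun i => ⟨hcR i, fun σ => hfix σ i⟩, ?_⟩
  rw [hq, eval_prod]
  refine Finset.prod_eq_zero ((s18_mem_oF hlf).2 (MulAction.mem_orbit_self r)) ?_
  simp

lemma s18_to_isIntegral {S : Subring T} (t : T) (p : Polynomial T) (hm : p.Monic)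
    (hc : ∀ i, p.coeff i ∈ S) (he : p.eval t = 0) : IsIntegral ↥S t := by
  have hsub : ↑p.coeffs ⊆ (S : Set T) := by
    intro c hc'
    obtain ⟨n, _, rfl⟩ := Polynomial.mem_coeffs_iff.1 hc'
    exact hc n
  refine ⟨p.toSubring S hsub, (Polynomial.monic_toSubring _ _ _).2 hm, ?_⟩
  have halg : algebraMap ↥S T = S.subtype := rfl
  rw [← Polynomial.eval_map, halg, Polynomial.map_toSubring]
  exact he

lemma s18_of_isIntegral {S : Subring T} (t : T) (h : IsIntegral ↥S t) :
    IntegralOver S t := by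
  obtain ⟨q, hm, he⟩ := h
  refine ⟨q.map S.subtype, hm.map _, fun i => ?_, ?_⟩
  · rw [Polynomial.coeff_map]
    exact (q.coeff i).2
  · have halg : algebraMap ↥S T = S.subtype := rfl
    rwa [Polynomial.eval_map, ← halg]

lemma s18_integral_A (hlf : ∀ t : T, (MulAction.orbit G t).Finite) {R : Subring T}
    (hinv : ∀ σ : G, ∀ r ∈ R, σ • r ∈ R)
    (hMmaxR : (conductorIdeal R).IsMaximal) {N : Ideal T}
    (hNset : ∀ x : T, x ∈ N ↔ x ∈ R ∧ ∀ t : T, x * t ∈ R) (hNmax : N.IsMaximal)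
    (hf2 : ∀ S : Subring (T ⧸ N), ((Ideal.Quotient.mk N).comp R.subtype).range ≤ S →
      S = ((Ideal.Quotient.mk N).comp R.subtype).range ∨ S = ⊤)
    (t : T) : IntegralOver (R ⊓ fixedSubring G T) t := by
  set A := R ⊓ fixedSubring G T with hA
  have hAR : A ≤ R := inf_le_left
  letI : Algebra ↥A ↥R := (Subring.inclusion hAR).toAlgebra
  haveI : IsScalarTower ↥A ↥R T := IsScalarTower.of_algebraMap_eq (fun x => rfl)
  haveI hint : Algebra.IsIntegral ↥A ↥R := by
    constructor
    intro r
    obtain ⟨q, hm, hc, he⟩ := s18_orbit_poly hlf hinv r.2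
    have h1 : IsIntegral ↥A ((algebraMap ↥R T) r) := s18_to_isIntegral _ q hm hc he
    have hinj : Function.Injective ⇑(algebraMap ↥R T) := Subtype.coe_injective
    exact (isIntegral_algebraMap_iff hinj).1 h1
  obtain ⟨p, hm, hc, he⟩ := s18_integral_R hNset hMmaxR hNmax hf2 t
  have htR : IsIntegral ↥R t := s18_to_isIntegral t p hm hc he
  exact s18_of_isIntegral t (isIntegral_trans (R := ↥A) t htR)

end Aux5
noncomputable section Aux6
open Polynomial
variable {G T : Type*} [CommRing T] [Group G] [MulSemiringAction G T]

def s18_sigmaHat (N : Ideal T) (hNinv : ∀ σ : G, ∀ x ∈ N, σ • x ∈ N) (σ : G) :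
    T ⧸ N →+* T ⧸ N :=
  Ideal.quotientMap N (MulSemiringAction.toRingHom G T σ) (fun x hx => hNinv σ x hx)

lemma s18_sigmaHat_mk {N : Ideal T} (hNinv : ∀ σ : G, ∀ x ∈ N, σ • x ∈ N) (σ : G)
    (x : T) : s18_sigmaHat N hNinv σ (Ideal.Quotient.mk N x) =
      Ideal.Quotient.mk N (σ • x) :=
  Ideal.quotientMap_mk

lemma s18_kappa_inv {R : Subring T} {N : Ideal T}
    (hNset : ∀ x : T, x ∈ N ↔ x ∈ R ∧ ∀ t : T, x * t ∈ R)
    (hMmaxR : (conductorIdeal R).IsMaximal)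
    {b : T ⧸ N} (hb : b ∈ ((Ideal.Quotient.mk N).comp R.subtype).range)
    (hb0 : b ≠ 0) : ∃ c ∈ ((Ideal.Quotient.mk N).comp R.subtype).range, b * c = 1 := by
  obtain ⟨rr, rfl⟩ := hb
  have hrN : (rr : T) ∉ N := by
    intro h
    exact hb0 (Ideal.Quotient.eq_zero_iff_mem.2 h)
  obtain ⟨y, hyR, hrel⟩ := s18_exists_inv_R hNset hMmaxR rr.2 hrN
  refine ⟨Ideal.Quotient.mk N y, ⟨⟨y, hyR⟩, rfl⟩, ?_⟩
  have : Ideal.Quotient.mk N ((rr : T) * y) = Ideal.Quotient.mk N 1 :=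
    Ideal.Quotient.eq.2 hrel
  simpa [map_mul] using this

lemma s18_fixed_kappa_mem_D (hlf : ∀ t : T, (MulAction.orbit G t).Finite)
    {R : Subring T} (hinv : ∀ σ : G, ∀ r ∈ R, σ • r ∈ R)
    (hMmaxR : (conductorIdeal R).IsMaximal) {N : Ideal T}
    (hNset : ∀ x : T, x ∈ N ↔ x ∈ R ∧ ∀ t : T, x * t ∈ R) (hNmax : N.IsMaximal)
    (hchar : ∀ r : T, r ∈ R →
      ¬ (ringChar (↥(R ⊓ fixedSubring G T) ⧸
            (N.comap (R ⊓ fixedSubring G T).subtype)) : ℕ)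
          ∣ Nat.card (MulAction.orbit G r))
    (hNinv : ∀ σ : G, ∀ x ∈ N, σ • x ∈ N)
    {b : T ⧸ N} (hb : b ∈ ((Ideal.Quotient.mk N).comp R.subtype).range)
    (hbfix : ∀ σ : G, s18_sigmaHat N hNinv σ b = b) :
    b ∈ ((Ideal.Quotient.mk N).comp (R ⊓ fixedSubring G T).subtype).range := by
  obtain ⟨rr, rfl⟩ := hb
  have hfixN : ∀ σ : G, σ • (rr : T) - rr ∈ N := by
    intro σ
    have := hbfix σ
    rw [RingHom.comp_apply] at this
    rw [s18_sigmaHat_mk hNinv σ] at this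
    exact Ideal.Quotient.eq.1 this
  obtain ⟨r', hr'A, hrN⟩ := s18_avg hlf hinv hMmaxR hNset hNmax hchar (rr : T) rr.2 hfixN
  refine ⟨⟨r', hr'A⟩, ?_⟩
  show Ideal.Quotient.mk N r' = Ideal.Quotient.mk N (rr : T)
  exact (Ideal.Quotient.eq.2 hrN).symm

lemma s18_artin (hlf : ∀ t : T, (MulAction.orbit G t).Finite)
    {R : Subring T} (hinv : ∀ σ : G, ∀ r ∈ R, σ • r ∈ R)
    (hMmaxR : (conductorIdeal R).IsMaximal) {N : Ideal T}
    (hNset : ∀ x : T, x ∈ N ↔ x ∈ R ∧ ∀ t : T, x * t ∈ R) (hNmax : N.IsMaximal)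
    (hchar : ∀ r : T, r ∈ R →
      ¬ (ringChar (↥(R ⊓ fixedSubring G T) ⧸
            (N.comap (R ⊓ fixedSubring G T).subtype)) : ℕ)
          ∣ Nat.card (MulAction.orbit G r))
    (hNinv : ∀ σ : G, ∀ x ∈ N, σ • x ∈ N)
    (X : Subring (T ⧸ N))
    (hDX : ((Ideal.Quotient.mk N).comp (R ⊓ fixedSubring G T).subtype).range ≤ X)
    (hXfix : ∀ x ∈ X, ∀ σ : G, s18_sigmaHat N hNinv σ x = x) :
    ∀ (n : ℕ) (s : Finset (T ⧸ N)) (a : T ⧸ N → T ⧸ N), s.card ≤ n →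
      (∀ w ∈ s, a w ∈ ((Ideal.Quotient.mk N).comp R.subtype).range) →
      (∀ w ∈ s, w ∈ X) →
      (∀ σ : G, s18_sigmaHat N hNinv σ (∑ w ∈ s, a w * w) = ∑ w ∈ s, a w * w) →
      (∑ w ∈ s, a w * w) ∈ X := by
  classical
  intro n
  induction n with
  | zero =>
    intro s a hcard _ _ _
    have : s = ∅ := Finset.card_eq_zero.1 (Nat.le_zero.1 hcard)
    rw [this, Finset.sum_empty]
    exact X.zero_mem
  | succ n ih =>
    intro s a hcard haκ hwX hfix
    by_cases hA : ∀ σ : G, ∀ w ∈ s, s18_sigmaHat N hNinv σ (a w) = a w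
    · refine X.sum_mem (fun w hw => X.mul_mem ?_ (hwX w hw))
      exact hDX (s18_fixed_kappa_mem_D hlf hinv hMmaxR hNset hNmax hchar hNinv
        (haκ w hw) (fun σ => hA σ w hw))
    · push_neg at hA
      obtain ⟨σ, w₀, hw₀s, hne⟩ := hA
      set b : T ⧸ N → T ⧸ N := fun w => s18_sigmaHat N hNinv σ (a w) - a w with hbdef
      have hbκ : ∀ w ∈ s, b w ∈ ((Ideal.Quotient.mk N).comp R.subtype).range := by
        intro w hw
        obtain ⟨rr, hrr⟩ := haκ w hw
        refine Subring.sub_mem _ ⟨⟨σ • (rr : T), hinv σ _ rr.2⟩, ?_⟩ (haκ w hw)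
        show Ideal.Quotient.mk N (σ • (rr : T)) = s18_sigmaHat N hNinv σ (a w)
        rw [← hrr]
        exact (s18_sigmaHat_mk hNinv σ _).symm
      have hb0 : b w₀ ≠ 0 := sub_ne_zero_of_ne hne
      have hrel : ∑ w ∈ s, b w * w = 0 := by
        have h1 : s18_sigmaHat N hNinv σ (∑ w ∈ s, a w * w)
            = ∑ w ∈ s, s18_sigmaHat N hNinv σ (a w) * w := by
          rw [map_sum]
          refine Finset.sum_congr rfl (fun w hw => ?_)
          rw [map_mul, hXfix w (hwX w hw) σ]
        have h2 := hfix σ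
        rw [h1] at h2
        have : ∑ w ∈ s, b w * w
            = ∑ w ∈ s, s18_sigmaHat N hNinv σ (a w) * w - ∑ w ∈ s, a w * w := by
          rw [← Finset.sum_sub_distrib]
          exact Finset.sum_congr rfl (fun w _ => by rw [hbdef]; ring)
        rw [this, h2, sub_self]
      obtain ⟨binv, hbinvκ, hbinv⟩ := s18_kappa_inv hNset hMmaxR (hbκ w₀ hw₀s) hb0
      have h3 : b w₀ * w₀ + ∑ w ∈ s.erase w₀, b w * w = ∑ w ∈ s, b w * w :=
        Finset.add_sum_erase s (fun w => b w * w) hw₀s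
      have hsum : (-binv) * (∑ w ∈ s.erase w₀, b w * w)
          = ∑ w ∈ s.erase w₀, (-(binv * b w)) * w := by
        rw [Finset.mul_sum]
        exact Finset.sum_congr rfl (fun w _ => by ring)
      have hw0 : w₀ = ∑ w ∈ s.erase w₀, (-(binv * b w)) * w := by
        linear_combination binv * h3 + binv * hrel - w₀ * hbinv + hsum
      set a' : T ⧸ N → T ⧸ N := fun w => a w + a w₀ * (-(binv * b w)) with ha'def
      have key : ∑ w ∈ s.erase w₀, a' w * w = ∑ w ∈ s, a w * w := by
        have h5 : ∑ w ∈ s.erase w₀, a' w * w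
            = ∑ w ∈ s.erase w₀, a w * w
              + a w₀ * ∑ w ∈ s.erase w₀, (-(binv * b w)) * w := by
          rw [Finset.mul_sum, ← Finset.sum_add_distrib]
          exact Finset.sum_congr rfl (fun w _ => by rw [ha'def]; ring)
        have h6 : a w₀ * w₀ + ∑ w ∈ s.erase w₀, a w * w = ∑ w ∈ s, a w * w :=
          Finset.add_sum_erase s (fun w => a w * w) hw₀s
        linear_combination h5 + h6 - a w₀ * hw0
      rw [← key]
      refine ih (s.erase w₀) a' ?_ ?_ ?_ ?_
      · have := Finset.card_erase_of_mem hw₀s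
        omega
      · intro w hw
        refine Subring.add_mem _ (haκ w (Finset.mem_of_mem_erase hw)) ?_
        refine Subring.mul_mem _ (haκ w₀ hw₀s) ?_
        exact Subring.neg_mem _ (Subring.mul_mem _ hbinvκ (hbκ w (Finset.mem_of_mem_erase hw)))
      · exact fun w hw => hwX w (Finset.mem_of_mem_erase hw)
      · intro τ
        rw [key]
        exact hfix τ

end Aux6
noncomputable section Aux7
open Polynomial Pointwise
variable {G T : Type*} [CommRing T] [Group G] [MulSemiringAction G T]

lemma s18_E_fix {N : Ideal T} (hNinv : ∀ σ : G, ∀ x ∈ N, σ • x ∈ N)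
    {x : T ⧸ N} (hx : x ∈ ((Ideal.Quotient.mk N).comp (fixedSubring G T).subtype).range)
    (σ : G) : s18_sigmaHat N hNinv σ x = x := by
  obtain ⟨b, rfl⟩ := hx
  show s18_sigmaHat N hNinv σ (Ideal.Quotient.mk N (b : T)) = _
  rw [s18_sigmaHat_mk hNinv σ, b.2 σ]
  rfl

lemma s18_min_F (hlf : ∀ t : T, (MulAction.orbit G t).Finite)
    {R : Subring T} (hinv : ∀ σ : G, ∀ r ∈ R, σ • r ∈ R)
    (hMmaxR : (conductorIdeal R).IsMaximal) {N : Ideal T}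
    (hNset : ∀ x : T, x ∈ N ↔ x ∈ R ∧ ∀ t : T, x * t ∈ R) (hNmax : N.IsMaximal)
    (hchar : ∀ r : T, r ∈ R →
      ¬ (ringChar (↥(R ⊓ fixedSubring G T) ⧸
            (N.comap (R ⊓ fixedSubring G T).subtype)) : ℕ)
          ∣ Nat.card (MulAction.orbit G r))
    (hNinv : ∀ σ : G, ∀ x ∈ N, σ • x ∈ N)
    (hf2 : ∀ S : Subring (T ⧸ N), ((Ideal.Quotient.mk N).comp R.subtype).range ≤ S →
      S = ((Ideal.Quotient.mk N).comp R.subtype).range ∨ S = ⊤)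
    (X : Subring (T ⧸ N))
    (hDX : ((Ideal.Quotient.mk N).comp (R ⊓ fixedSubring G T).subtype).range ≤ X)
    (hXE : X ≤ ((Ideal.Quotient.mk N).comp (fixedSubring G T).subtype).range) :
    X = ((Ideal.Quotient.mk N).comp (R ⊓ fixedSubring G T).subtype).range ∨
      X = ((Ideal.Quotient.mk N).comp (fixedSubring G T).subtype).range := by
  classical
  set κ := ((Ideal.Quotient.mk N).comp R.subtype).range with hκ
  set Y := Subring.closure ((κ : Set (T ⧸ N)) ∪ (X : Set (T ⧸ N))) with hY
  have hκY : κ ≤ Y := fun a ha => Subring.subset_closure (Or.inl ha)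
  have hXfix : ∀ x ∈ X, ∀ σ : G, s18_sigmaHat N hNinv σ x = x :=
    fun x hx σ => s18_E_fix hNinv (hXE hx) σ
  rcases hf2 Y hκY with hYκ | hYtop
  · left
    refine le_antisymm (fun x hx => ?_) hDX
    have hxκ : x ∈ κ := by
      rw [← hYκ]
      exact Subring.subset_closure (Or.inr hx)
    exact s18_fixed_kappa_mem_D hlf hinv hMmaxR hNset hNmax hchar hNinv hxκ
      (hXfix x hx)
  · right
    refine le_antisymm hXE (fun u hu => ?_)
    -- span of X over κ
    set W := Submodule.span ↥κ (X : Set (T ⧸ N)) with hW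
    have hmulXX : (X : Set (T ⧸ N)) * (X : Set (T ⧸ N)) ⊆ (X : Set (T ⧸ N)) := by
      rintro z ⟨p, hp, q, hq, rfl⟩
      exact X.mul_mem hp hq
    have hWmul : ∀ {p q : T ⧸ N}, p ∈ W → q ∈ W → p * q ∈ W := by
      intro p q hp hq
      have h := Submodule.mul_mem_mul hp hq
      rw [Submodule.span_mul_span] at h
      exact Submodule.span_le.2
        (fun z hz => Submodule.subset_span (hmulXX hz)) h
    set Wr : Subring (T ⧸ N) :=
      { carrier := (W : Set (T ⧸ N))
        zero_mem' := W.zero_mem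
        one_mem' := Submodule.subset_span X.one_mem
        add_mem' := fun ha hb => W.add_mem ha hb
        neg_mem' := fun ha => W.neg_mem ha
        mul_mem' := fun ha hb => hWmul ha hb } with hWr
    have hYW : Y ≤ Wr := by
      rw [hY]
      refine Subring.closure_le.2 (fun z hz => ?_)
      rcases hz with hz | hz
      · have h1 := W.smul_mem (⟨z, hz⟩ : ↥κ) (Submodule.subset_span X.one_mem)
        have h2 : (⟨z, hz⟩ : ↥κ) • (1 : T ⧸ N) = z := by
          rw [Algebra.smul_def, mul_one]
          rfl
        rw [h2] at h1
        exact h1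
      · exact Submodule.subset_span hz
    have huW : u ∈ W := hYW (by rw [hYtop]; trivial)
    obtain ⟨c, hsup, hsum⟩ := Submodule.mem_span_set.1 huW
    have hsumEq : ∑ w ∈ c.support, ((c w : T ⧸ N) * w) = u := by
      rw [← hsum]
      rw [Finsupp.sum]
      exact Finset.sum_congr rfl (fun w _ => by rw [Algebra.smul_def]; rfl)
    have := s18_artin hlf hinv hMmaxR hNset hNmax hchar hNinv X hDX hXfix
      c.support.card c.support (fun w => (c w : T ⧸ N)) le_rfl
      (fun w _ => (c w).2) (fun w hw => hsup hw)
      (fun σ => by rw [hsumEq]; exact s18_E_fix hNinv hu σ)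
    rwa [hsumEq] at this

end Aux7
noncomputable section Aux8
open Polynomial
variable {G T : Type*} [CommRing T] [Group G] [MulSemiringAction G T]

lemma s18_min_Bquot (hlf : ∀ t : T, (MulAction.orbit G t).Finite)
    {R : Subring T} (hinv : ∀ σ : G, ∀ r ∈ R, σ • r ∈ R)
    (hMmaxR : (conductorIdeal R).IsMaximal) {N : Ideal T}
    (hNset : ∀ x : T, x ∈ N ↔ x ∈ R ∧ ∀ t : T, x * t ∈ R) (hNmax : N.IsMaximal)
    (hchar : ∀ r : T, r ∈ R →
      ¬ (ringChar (↥(R ⊓ fixedSubring G T) ⧸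
            (N.comap (R ⊓ fixedSubring G T).subtype)) : ℕ)
          ∣ Nat.card (MulAction.orbit G r))
    (hf2 : ∀ S : Subring (T ⧸ N), ((Ideal.Quotient.mk N).comp R.subtype).range ≤ S →
      S = ((Ideal.Quotient.mk N).comp R.subtype).range ∨ S = ⊤)
    (S : Subring ((fixedSubring G T) ⧸ (N.comap (fixedSubring G T).subtype)))
    (hS : ((Ideal.Quotient.mk (N.comap (fixedSubring G T).subtype)).comp
        (Subring.inclusion (inf_le_right : R ⊓ fixedSubring G T ≤ fixedSubring G T))).range
        ≤ S) :
    S = ((Ideal.Quotient.mk (N.comap (fixedSubring G T).subtype)).comp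
        (Subring.inclusion (inf_le_right : R ⊓ fixedSubring G T ≤ fixedSubring G T))).range
      ∨ S = ⊤ := by
  have hNinv : ∀ σ : G, ∀ x ∈ N, σ • x ∈ N :=
    fun σ x hx => s18_smul_mem_N hinv hNset σ hx
  let j : (↥(fixedSubring G T) ⧸ (N.comap (fixedSubring G T).subtype)) →+* T ⧸ N :=
    Ideal.quotientMap N (fixedSubring G T).subtype le_rfl
  have hjmk : ∀ b : ↥(fixedSubring G T),
      j (Ideal.Quotient.mk (N.comap (fixedSubring G T).subtype) b)
        = Ideal.Quotient.mk N (b : T) :=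
    fun b => Ideal.quotientMap_mk
  have hjinj : Function.Injective ⇑j := Ideal.quotientMap_injective' le_rfl
  have hDX : ((Ideal.Quotient.mk N).comp (R ⊓ fixedSubring G T).subtype).range
      ≤ Subring.map j S := by
    rintro z ⟨xa, rfl⟩
    refine ⟨Ideal.Quotient.mk (N.comap (fixedSubring G T).subtype)
      (Subring.inclusion inf_le_right xa), hS ⟨xa, rfl⟩, ?_⟩
    rw [hjmk]
    rfl
  have hXE : Subring.map j S ≤ ((Ideal.Quotient.mk N).comp (fixedSubring G T).subtype).range := by
    rintro z ⟨w, hwS, rfl⟩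
    obtain ⟨b, rfl⟩ := Ideal.Quotient.mk_surjective w
    exact ⟨b, (hjmk b).symm⟩
  rcases s18_min_F hlf hinv hMmaxR hNset hNmax hchar hNinv hf2 (Subring.map j S) hDX hXE
    with h | h
  · left
    refine le_antisymm (fun z hz => ?_) hS
    obtain ⟨b, rfl⟩ := Ideal.Quotient.mk_surjective z
    have hzX : j (Ideal.Quotient.mk (N.comap (fixedSubring G T).subtype) b)
        ∈ Subring.map j S := ⟨_, hz, rfl⟩
    rw [h] at hzX
    obtain ⟨xa, hxa⟩ := hzX
    refine ⟨xa, ?_⟩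
    have hxa2 : Ideal.Quotient.mk N ((xa : T)) = Ideal.Quotient.mk N ((b : T)) := by
      rw [← hjmk b]
      exact hxa
    have hdiff : (xa : T) - (b : T) ∈ N := Ideal.Quotient.eq.1 hxa2
    show Ideal.Quotient.mk _ (Subring.inclusion inf_le_right xa) = Ideal.Quotient.mk _ b
    apply Ideal.Quotient.eq.2
    rw [Ideal.mem_comap]
    simpa using hdiff
  · right
    rw [eq_top_iff]
    intro z _
    obtain ⟨b, rfl⟩ := Ideal.Quotient.mk_surjective z
    have : j (Ideal.Quotient.mk (N.comap (fixedSubring G T).subtype) b)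
        ∈ Subring.map j S := by
      rw [h]
      exact ⟨b, (hjmk b).symm⟩
    obtain ⟨w, hwS, hjw⟩ := this
    rwa [hjinj hjw] at hwS

end Aux8
noncomputable section Aux9
open Polynomial
variable {G T : Type*} [CommRing T] [Group G] [MulSemiringAction G T]

theorem stmt18' (hlf : ∀ t : T, (MulAction.orbit G t).Finite)
    (R : Subring T) (hinv : ∀ σ : G, ∀ r ∈ R, σ • r ∈ R)
    (hMmaxR : (conductorIdeal R).IsMaximal)
    (N : Ideal T) (hNset : ∀ x : T, x ∈ N ↔ x ∈ R ∧ ∀ t : T, x * t ∈ R)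
    (hNmax : N.IsMaximal)
    (hfieldmin :
      ((Ideal.Quotient.mk N).comp R.subtype).range ≠ ⊤ ∧
      ∀ S : Subring (T ⧸ N), ((Ideal.Quotient.mk N).comp R.subtype).range ≤ S →
        S = ((Ideal.Quotient.mk N).comp R.subtype).range ∨ S = ⊤)
    (hne : R ⊓ fixedSubring G T ≠ fixedSubring G T)
    (hchar : ∀ r : T, r ∈ R →
      ¬ (ringChar (↥(R ⊓ fixedSubring G T) ⧸
            (N.comap (R ⊓ fixedSubring G T).subtype)) : ℕ)
          ∣ Nat.card (MulAction.orbit G r)) :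
    ({x : T | x ∈ R ⊓ fixedSubring G T ∧
        ∀ t ∈ fixedSubring G T, x * t ∈ R ⊓ fixedSubring G T}
      = {x : T | x ∈ R ⊓ fixedSubring G T ∧ x ∈ N}) ∧
    IsMinimalPair (R ⊓ fixedSubring G T) (fixedSubring G T) ∧
    (∀ t : T, t ∈ fixedSubring G T → IntegralOver (R ⊓ fixedSubring G T) t) ∧
    (N.comap (R ⊓ fixedSubring G T).subtype).IsMaximal ∧
    (N.comap (fixedSubring G T).subtype).IsMaximal ∧
    (((Ideal.Quotient.mk (N.comap (fixedSubring G T).subtype)).comp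
        (Subring.inclusion (inf_le_right : R ⊓ fixedSubring G T ≤ fixedSubring G T))).range ≠ ⊤ ∧
      ∀ S : Subring ((fixedSubring G T) ⧸ (N.comap (fixedSubring G T).subtype)),
        ((Ideal.Quotient.mk (N.comap (fixedSubring G T).subtype)).comp
          (Subring.inclusion (inf_le_right : R ⊓ fixedSubring G T ≤ fixedSubring G T))).range ≤ S →
        S = ((Ideal.Quotient.mk (N.comap (fixedSubring G T).subtype)).comp
          (Subring.inclusion (inf_le_right : R ⊓ fixedSubring G T ≤ fixedSubring G T))).range ∨
        S = ⊤) := by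
  have hNinv : ∀ σ : G, ∀ x ∈ N, σ • x ∈ N :=
    fun σ x hx => s18_smul_mem_N hinv hNset σ hx
  have bullet1 : ({x : T | x ∈ R ⊓ fixedSubring G T ∧
        ∀ t ∈ fixedSubring G T, x * t ∈ R ⊓ fixedSubring G T}
      = {x : T | x ∈ R ⊓ fixedSubring G T ∧ x ∈ N}) := by
    ext x
    simp only [Set.mem_setOf_eq]
    constructor
    · rintro ⟨hxA, hcond⟩
      refine ⟨hxA, ?_⟩
      by_contra hxN
      obtain ⟨y, hyR, hrel⟩ := s18_exists_inv_R hNset hMmaxR hxA.1 hxN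
      have hBA : fixedSubring G T ≤ R ⊓ fixedSubring G T := by
        intro t ht
        have h1 : x * t ∈ R ⊓ fixedSubring G T := hcond t ht
        have hm : (1 - x * y) ∈ N := by
          have he : 1 - x * y = -(x * y - 1) := by ring
          rw [he]; exact N.neg_mem hrel
        have hmc := (hNset _).1 hm
        refine ⟨?_, ht⟩
        have he2 : t = y * (x * t) + (1 - x * y) * t := by ring
        rw [he2]
        exact R.add_mem (R.mul_mem hyR h1.1) (hmc.2 t)
      exact hne (le_antisymm inf_le_right hBA)
    · rintro ⟨hxA, hxN⟩
      refine ⟨hxA, fun t ht => ?_⟩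
      refine ⟨((hNset x).1 hxN).2 t, ?_⟩
      intro σ
      rw [smul_mul', (s18_mem_fixedSubring.1 hxA.2) σ, (s18_mem_fixedSubring.1 ht) σ]
  have hD'netop : ((Ideal.Quotient.mk (N.comap (fixedSubring G T).subtype)).comp
      (Subring.inclusion (inf_le_right : R ⊓ fixedSubring G T ≤ fixedSubring G T))).range
      ≠ ⊤ := by
    intro h
    apply hne
    refine le_antisymm inf_le_right (fun t ht => ?_)
    have hmem : Ideal.Quotient.mk (N.comap (fixedSubring G T).subtype)
        (⟨t, ht⟩ : ↥(fixedSubring G T)) ∈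
        ((Ideal.Quotient.mk (N.comap (fixedSubring G T).subtype)).comp
          (Subring.inclusion (inf_le_right : R ⊓ fixedSubring G T ≤ fixedSubring G T))).range := by
      rw [h]; trivial
    obtain ⟨xa, hxa⟩ := hmem
    have hd0 : (Subring.inclusion (inf_le_right : R ⊓ fixedSubring G T ≤ fixedSubring G T) xa
        - ⟨t, ht⟩ : ↥(fixedSubring G T)) ∈ N.comap (fixedSubring G T).subtype :=
      Ideal.Quotient.eq.1 hxa
    rw [Ideal.mem_comap] at hd0
    have hdiff2 : (xa : T) - t ∈ N := by simpa using hd0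
    have he : t = (xa : T) - ((xa : T) - t) := by ring
    refine ⟨?_, ht⟩
    rw [he]
    exact R.sub_mem xa.2.1 (((hNset _).1 hdiff2).1)
  have hB2 := s18_min_Bquot hlf hinv hMmaxR hNset hNmax hchar hfieldmin.2
  have bullet2 : IsMinimalPair (R ⊓ fixedSubring G T) (fixedSubring G T) := by
    constructor
    · exact lt_of_le_of_ne inf_le_right hne
    · intro S hAS hSB
      have hD'S : ((Ideal.Quotient.mk (N.comap (fixedSubring G T).subtype)).comp
          (Subring.inclusion (inf_le_right : R ⊓ fixedSubring G T ≤ fixedSubring G T))).range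
          ≤ Subring.map (Ideal.Quotient.mk (N.comap (fixedSubring G T).subtype))
            (Subring.comap (fixedSubring G T).subtype S) := by
        rintro z ⟨xa, rfl⟩
        exact ⟨Subring.inclusion inf_le_right xa, hAS xa.2, rfl⟩
      rcases hB2 _ hD'S with h | h
      · left
        refine le_antisymm (fun s hs => ?_) hAS
        have hsS : Ideal.Quotient.mk (N.comap (fixedSubring G T).subtype)
            (⟨s, hSB hs⟩ : ↥(fixedSubring G T)) ∈
            Subring.map (Ideal.Quotient.mk (N.comap (fixedSubring G T).subtype))
              (Subring.comap (fixedSubring G T).subtype S) :=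
          ⟨⟨s, hSB hs⟩, hs, rfl⟩
        rw [h] at hsS
        obtain ⟨xa, hxa⟩ := hsS
        have hd0 : (Subring.inclusion (inf_le_right : R ⊓ fixedSubring G T ≤ fixedSubring G T) xa
            - ⟨s, hSB hs⟩ : ↥(fixedSubring G T)) ∈ N.comap (fixedSubring G T).subtype :=
          Ideal.Quotient.eq.1 hxa
        rw [Ideal.mem_comap] at hd0
        have hdiff : (xa : T) - s ∈ N := by simpa using hd0
        have hdR : (xa : T) - s ∈ R := ((hNset _).1 hdiff).1
        have hdfix : (xa : T) - s ∈ fixedSubring G T :=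
          (fixedSubring G T).sub_mem xa.2.2 (hSB hs)
        have he : s = (xa : T) - ((xa : T) - s) := by ring
        rw [he]
        exact Subring.sub_mem _ xa.2 ⟨hdR, hdfix⟩
      · right
        refine le_antisymm hSB (fun t ht => ?_)
        have hmem : Ideal.Quotient.mk (N.comap (fixedSubring G T).subtype)
            (⟨t, ht⟩ : ↥(fixedSubring G T)) ∈
            Subring.map (Ideal.Quotient.mk (N.comap (fixedSubring G T).subtype))
              (Subring.comap (fixedSubring G T).subtype S) := by
          rw [h]; trivial
        obtain ⟨w, hwS, hw⟩ := hmem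
        have hd0 : (w - ⟨t, ht⟩ : ↥(fixedSubring G T)) ∈ N.comap (fixedSubring G T).subtype :=
          Ideal.Quotient.eq.1 hw
        rw [Ideal.mem_comap] at hd0
        have hdiff : (w : T) - t ∈ N := by simpa using hd0
        have hdA : (w : T) - t ∈ R ⊓ fixedSubring G T :=
          ⟨((hNset _).1 hdiff).1, (fixedSubring G T).sub_mem w.2 ht⟩
        have he : t = (w : T) - ((w : T) - t) := by ring
        rw [he]
        exact S.sub_mem hwS (hAS hdA)
  refine ⟨bullet1, bullet2, ?_, ?_, ?_, hD'netop, hB2⟩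
  · exact fun t _ => s18_integral_A hlf hinv hMmaxR hNset hNmax hfieldmin.2 t
  · exact s18_IA_max hlf hinv hMmaxR hNset hNmax
  · exact s18_IB_max hlf hinv hNset hNmax

end Aux9

/-- invariance of inert integral minimal ring extensions.  Assume
`R ⊂ T` is inert: the conductor `M = (R :_R T)` is a maximal ideal of `R`, is a
maximal ideal `N` of `T`, and `R/M ⊂ T/M` is a minimal field extension.  If `G`
is locally finite, `R^G ≠ T^G`, and `char(R^G/(M ∩ T^G))` divides no orbit size
`n_r` for `r ∈ R`, then `R^G ⊂ T^G` is an inert integral minimal ring extension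
with crucial maximal ideal `(R^G :_{R^G} T^G) = M ∩ R^G`. -/
theorem stmt18 (G T : Type*) [CommRing T] [Group G] [MulSemiringAction G T]
    (hlf : ∀ t : T, (MulAction.orbit G t).Finite)
    (R : Subring T) (hinv : ∀ σ : G, ∀ r ∈ R, σ • r ∈ R)
    -- `M = (R :_R T)` is a maximal ideal of `R`
    (hMmaxR : (conductorIdeal R).IsMaximal)
    -- `M` is also a maximal ideal `N` of `T`
    (N : Ideal T) (hNset : ∀ x : T, x ∈ N ↔ x ∈ R ∧ ∀ t : T, x * t ∈ R)
    (hNmax : N.IsMaximal)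
    -- `R/M ⊂ T/M` is a minimal field extension
    (hfieldmin :
      ((Ideal.Quotient.mk N).comp R.subtype).range ≠ ⊤ ∧
      ∀ S : Subring (T ⧸ N), ((Ideal.Quotient.mk N).comp R.subtype).range ≤ S →
        S = ((Ideal.Quotient.mk N).comp R.subtype).range ∨ S = ⊤)
    -- `G` locally finite, `R^G ≠ T^G`, characteristic condition
    (hne : R ⊓ fixedSubring G T ≠ fixedSubring G T)
    (hchar : ∀ r : T, r ∈ R →
      ¬ (ringChar (↥(R ⊓ fixedSubring G T) ⧸
            (N.comap (R ⊓ fixedSubring G T).subtype)) : ℕ)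
          ∣ Nat.card (MulAction.orbit G r)) :
    -- the conductor `(R^G :_{R^G} T^G)` is `M ∩ R^G`
    ({x : T | x ∈ R ⊓ fixedSubring G T ∧
        ∀ t ∈ fixedSubring G T, x * t ∈ R ⊓ fixedSubring G T}
      = {x : T | x ∈ R ⊓ fixedSubring G T ∧ x ∈ N}) ∧
    -- `R^G ⊂ T^G` is a minimal ring extension
    IsMinimalPair (R ⊓ fixedSubring G T) (fixedSubring G T) ∧
    -- it is integral
    (∀ t : T, t ∈ fixedSubring G T → IntegralOver (R ⊓ fixedSubring G T) t) ∧
    -- the crucial maximal ideal `M ∩ R^G` is maximal in `R^G`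
    (N.comap (R ⊓ fixedSubring G T).subtype).IsMaximal ∧
    -- inert: `M ∩ T^G` is maximal in `T^G` and the quotient extension is a
    -- minimal field extension
    (N.comap (fixedSubring G T).subtype).IsMaximal ∧
    (((Ideal.Quotient.mk (N.comap (fixedSubring G T).subtype)).comp
        (Subring.inclusion (inf_le_right : R ⊓ fixedSubring G T ≤ fixedSubring G T))).range ≠ ⊤ ∧
      ∀ S : Subring ((fixedSubring G T) ⧸ (N.comap (fixedSubring G T).subtype)),
        ((Ideal.Quotient.mk (N.comap (fixedSubring G T).subtype)).comp
          (Subring.inclusion (inf_le_right : R ⊓ fixedSubring G T ≤ fixedSubring G T))).range ≤ S →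
        S = ((Ideal.Quotient.mk (N.comap (fixedSubring G T).subtype)).comp
          (Subring.inclusion (inf_le_right : R ⊓ fixedSubring G T ≤ fixedSubring G T))).range ∨
        S = ⊤) := by
  exact stmt18' hlf R hinv hMmaxR N hNset hNmax hfieldmin hne hchar
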